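/- There exists a two-element label poset failing the lifting theorem beyond totally ordered labels: take labels in {0,1}² with the product order, B a singleton, A = {1,2}, μ the uniform measure on the two configurations ((1,0),(0,0)) and ((0,0),(0,1)) of ({0,1}²)^A, and ρ the uniform measure on ((1,0),(0,1)) and ((0,1),(1,0)). Then μ is not stochastically dominated by ρ, even though every single configuration in the support of μ is coordinatewise below some configuration in the support of ρ. -/

import Mathlib

open MeasureTheory ProbabilityTheory

/-- `μ` is stochastically dominated by `ν`. -/
def StochDom {E : Type*} [MeasurableSpace E] [Preorder E] (μ ν : Measure E) : Prop :=
  ∃ κ : Measure (E × E), IsProbabilityMeasure κ ∧ κ.map Prod.fst = μ ∧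
    κ.map Prod.snd = ν ∧ κ {q | q.1 ≤ q.2} = 1

/-- Configurations: labels in `{0,1}²` (product order) on the two-element set `A`. -/
abbrev Config12 := Fin 2 → Bool × Bool

/-- The configuration `((1,0),(0,0))`. -/
def c₁ : Config12 := fun i => if i = 0 then (true, false) else (false, false)
/-- The configuration `((0,0),(0,1))`. -/
def c₂ : Config12 := fun i => if i = 0 then (false, false) else (false, true)
/-- The configuration `((1,0),(0,1))`. -/
def d₁ : Config12 := fun i => if i = 0 then (true, false) else (false, true)
/-- The configuration `((0,1),(1,0))`. -/
def d₂ : Config12 := fun i => if i = 0 then (false, true) else (true, false)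

noncomputable def μ12 : Measure Config12 :=
  (2 : ENNReal)⁻¹ • (Measure.dirac c₁ + Measure.dirac c₂)

noncomputable def ρ12 : Measure Config12 :=
  (2 : ENNReal)⁻¹ • (Measure.dirac d₁ + Measure.dirac d₂)

/-! A monotone coupling of `μ` and `ν` carries the event `{x ∈ U}` into `{y ∈ U}` for every upper
set `U`, so domination forces `μ U ≤ ν U`. Both atoms of `μ12` lie outside the lower set `Iic d₂`,
while only half of the mass of `ρ12` does, so `U = (Iic d₂)ᶜ` gives `1 ≤ 1/2`. -/

theorem StochDom.measure_le_of_isUpperSet {E : Type*} [MeasurableSpace E] [Preorder E]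
    {μ ν : Measure E} (h : StochDom μ ν) (hle : MeasurableSet {q : E × E | q.1 ≤ q.2})
    {U : Set E} (hU : IsUpperSet U) (hUm : MeasurableSet U) : μ U ≤ ν U := by
  obtain ⟨κ, hκ, rfl, rfl, hmono⟩ := h
  have hae : ∀ᵐ q ∂κ, q.1 ≤ q.2 := ae_iff.2 ((prob_compl_eq_zero_iff hle).2 hmono)
  rw [Measure.map_apply measurable_fst hUm, Measure.map_apply measurable_snd hUm]
  exact measure_mono_ae (hae.mono fun q hq h1 => hU hq h1)

theorem c₁_le_d₁ : c₁ ≤ d₁ := Pi.le_def.2 (by decide)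
theorem c₂_le_d₁ : c₂ ≤ d₁ := Pi.le_def.2 (by decide)
theorem c₁_not_le_d₂ : ¬ c₁ ≤ d₂ := mt Pi.le_def.1 (by decide)
theorem c₂_not_le_d₂ : ¬ c₂ ≤ d₂ := mt Pi.le_def.1 (by decide)
theorem d₁_not_le_d₂ : ¬ d₁ ≤ d₂ := mt Pi.le_def.1 (by decide)

/-- **Counterexample with non-totally-ordered labels:** every atom of `μ12` lies below
some atom of `ρ12`, yet `μ12` is not stochastically dominated by `ρ12`. -/
theorem stmt12 :
    (c₁ ≤ d₁ ∨ c₁ ≤ d₂) ∧ (c₂ ≤ d₁ ∨ c₂ ≤ d₂) ∧ ¬ StochDom μ12 ρ12 := by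
  refine ⟨Or.inl c₁_le_d₁, Or.inl c₂_le_d₁, fun h => ?_⟩
  have key := h.measure_le_of_isUpperSet .of_discrete (isUpperSet_compl.2 (isLowerSet_Iic d₂))
    .of_discrete
  simp [μ12, ρ12, c₁_not_le_d₂, c₂_not_le_d₂, d₁_not_le_d₂, ENNReal.inv_two_add_inv_two] at key
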